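/- Let θ ∈ (0, 0.29], let (x̄,ȳ,z̄,λ̄,γ̄) be a strictly feasible point lying in N₂(2θ) (i.e., ‖p̄∘ω̄ − μ̄e‖ ≤ 2θμ̄ where p̄=(ȳ,z̄), ω̄=(λ̄,γ̄), μ̄ = p̄ᵀω̄/(2n)), and let (Δx,Δy,Δz,Δλ,Δγ) be a corrector direction at this point. Then the updated point (x̄+Δx, ȳ+Δy, z̄+Δz, λ̄+Δλ, γ̄+Δγ) is strictly feasible and lies in N₂(θ): writing p⁺ = p̄+Δp, ω⁺ = ω̄+Δω, μ⁺ = (p⁺)ᵀω⁺/(2n), all components of p⁺ and ω⁺ are positive and ‖p⁺∘ω⁺ − μ⁺e‖ ≤ (√2·θ²/(1−2θ))·μ⁺ ≤ θ·μ⁺. -/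

import Mathlib

open scoped BigOperators

noncomputable section

/-- Euclidean dot product of two vectors. -/
def dotp {ι : Type*} [Fintype ι] (u v : ι → ℝ) : ℝ := ∑ i, u i * v i

/-- Euclidean norm of a vector. -/
def euclNorm {ι : Type*} [Fintype ι] (u : ι → ℝ) : ℝ := Real.sqrt (∑ i, (u i) ^ 2)

/-- Strict feasibility for the box-constrained QP KKT system. -/
def StrictlyFeasible {n : ℕ} (H : Matrix (Fin n) (Fin n) ℝ)
    (c x y z lam gam : Fin n → ℝ) : Prop :=
  H.mulVec x + c + lam - gam = 0 ∧
  x + y = (fun _ => 1) ∧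
  x - z = (fun _ => -1) ∧
  (∀ i, 0 < y i) ∧ (∀ i, 0 < z i) ∧ (∀ i, 0 < lam i) ∧ (∀ i, 0 < gam i)

/-- The central-path neighborhood `N₂(θ)`. -/
def N2 {n : ℕ} (H : Matrix (Fin n) (Fin n) ℝ) (c : Fin n → ℝ) (θ : ℝ)
    (x y z lam gam : Fin n → ℝ) : Prop :=
  StrictlyFeasible H c x y z lam gam ∧
  euclNorm (Sum.elim y z * Sum.elim lam gam
      - fun _ => dotp (Sum.elim y z) (Sum.elim lam gam) / (2 * (n : ℝ)))
    ≤ θ * (dotp (Sum.elim y z) (Sum.elim lam gam) / (2 * (n : ℝ)))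

/-- First-derivative direction of the arc at a point `(x,y,z,λ,γ)`. -/
def FirstDir {n : ℕ} (H : Matrix (Fin n) (Fin n) ℝ)
    (y z lam gam xd yd zd ld gd : Fin n → ℝ) : Prop :=
  H.mulVec xd + ld - gd = 0 ∧ yd = -xd ∧ zd = xd ∧
  lam * yd + y * ld = lam * y ∧ gam * zd + z * gd = gam * z

/-- Second-derivative direction of the arc at a point `(x,y,z,λ,γ)`. -/
def SecondDir {n : ℕ} (H : Matrix (Fin n) (Fin n) ℝ)
    (y z lam gam yd zd ld gd xdd ydd zdd ldd gdd : Fin n → ℝ) : Prop :=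
  H.mulVec xdd + ldd - gdd = 0 ∧ ydd = -xdd ∧ zdd = xdd ∧
  lam * ydd + y * ldd = (-2 : ℝ) • (ld * yd) ∧
  gam * zdd + z * gdd = (-2 : ℝ) • (gd * zd)

/-- The ellipse (arc) approximation point: `v(α) = v - v̇·sin α + v̈·(1 - cos α)`. -/
def arc {n : ℕ} (v vd vdd : Fin n → ℝ) (α : ℝ) : Fin n → ℝ :=
  v - Real.sin α • vd + (1 - Real.cos α) • vdd

/-- Corrector (centering) direction at a point `(x,y,z,λ,γ)` with target `μ`. -/
def CorrDir {n : ℕ} (H : Matrix (Fin n) (Fin n) ℝ)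
    (y z lam gam dx dy dz dl dg : Fin n → ℝ) (mu : ℝ) : Prop :=
  H.mulVec dx + dl - dg = 0 ∧ dy = -dx ∧ dz = dx ∧
  lam * dy + y * dl = (fun _ => mu) - lam * y ∧
  gam * dz + z * dg = (fun _ => mu) - gam * z

/-! The corrector equations give `p⁺ ∘ ω⁺ = μ̄ e + Δp ∘ Δω`, and `Δpᵀ Δω = Δxᵀ H Δx ≥ 0`.
In the scaling `u = D⁻¹ Δp`, `v = D Δω` with `D² = p̄ / ω̄` one has `u ∘ v = Δp ∘ Δω` and
`(u + v)ᵢ² = (μ̄ - p̄ᵢω̄ᵢ)² / (p̄ᵢω̄ᵢ) ≤ (μ̄ - p̄ᵢω̄ᵢ)² / ((1 - 2θ) μ̄)`, so the bound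
`‖u ∘ v‖ ≤ 2^{-3/2} ‖u + v‖²` for `uᵀv ≥ 0` yields `‖Δp ∘ Δω‖ ≤ √2 θ² μ̄ / (1 - 2θ)`.
Recentring at `μ⁺ ≥ μ̄` only shrinks the norm. Positivity: `p⁺ᵢω⁺ᵢ ≥ μ̄ - ‖Δp ∘ Δω‖ > 0`, and
`p̄ᵢω⁺ᵢ + ω̄ᵢp⁺ᵢ = p̄ᵢω̄ᵢ + μ̄ > 0` rules out both factors being negative. -/

open Finset

section EuclNorm

variable {ι : Type*} [Fintype ι]

lemma euclNorm_le_iff {u : ι → ℝ} {r : ℝ} (hr : 0 ≤ r) :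
    euclNorm u ≤ r ↔ ∑ i, u i ^ 2 ≤ r ^ 2 :=
  Real.sqrt_le_left hr

lemma abs_le_euclNorm (u : ι → ℝ) (i : ι) : |u i| ≤ euclNorm u :=
  Real.abs_le_sqrt (single_le_sum (fun j _ => sq_nonneg (u j)) (mem_univ i))

lemma euclNorm_sub_const_le (g : ι → ℝ) {m : ℝ} (hm : Fintype.card ι * m = ∑ i, g i) :
    euclNorm (g - fun _ => m) ≤ euclNorm g := by
  refine Real.sqrt_le_sqrt ?_
  have hexpand : ∑ i, (g i - m) ^ 2 = ∑ i, g i ^ 2 - Fintype.card ι * m ^ 2 := by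
    simp only [sub_sq, sum_add_distrib, sum_sub_distrib, ← sum_mul, ← mul_sum, sum_const,
      card_univ, nsmul_eq_mul, ← hm]
    ring
  simp only [Pi.sub_apply, hexpand]
  nlinarith [sq_nonneg m, (Nat.cast_nonneg (Fintype.card ι) : (0 : ℝ) ≤ _)]

/-- With `a = u ∘ v` and `q = (u + v)²` this is `‖u ∘ v‖ ≤ 2^{-3/2} ‖u + v‖²` for `uᵀv ≥ 0`;
the proof uses `‖a‖² = ‖a⁺‖² + ‖a⁻‖² ≤ 2 (∑ a⁺)²`. -/
lemma eight_mul_sum_sq_le_sq_sum {a q : ι → ℝ} (ha : 0 ≤ ∑ i, a i) (hq : ∀ i, 0 ≤ q i)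
    (haq : ∀ i, 4 * a i ≤ q i) : 8 * ∑ i, a i ^ 2 ≤ (∑ i, q i) ^ 2 := by
  set P := ∑ i, (a i)⁺
  set N := ∑ i, (a i)⁻
  have hPN : P - N = ∑ i, a i := by
    simp only [P, N, ← sum_sub_distrib, posPart_sub_negPart]
  have hsplit : ∑ i, a i ^ 2 = ∑ i, (a i)⁺ ^ 2 + ∑ i, (a i)⁻ ^ 2 := by
    rw [← sum_add_distrib]
    refine sum_congr rfl fun i _ => ?_
    rcases le_total (a i) 0 with h | h
    · simp [posPart_eq_zero.2 h, negPart_eq_neg.2 h]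
    · simp [posPart_eq_self.2 h, negPart_eq_zero.2 h]
  have hP : ∑ i, (a i)⁺ ^ 2 ≤ P ^ 2 := sum_sq_le_sq_sum_of_nonneg fun i _ => posPart_nonneg _
  have hN : ∑ i, (a i)⁻ ^ 2 ≤ N ^ 2 := sum_sq_le_sq_sum_of_nonneg fun i _ => negPart_nonneg _
  have hPq : 4 * P ≤ ∑ i, q i := by
    rw [mul_sum]
    refine sum_le_sum fun i _ => ?_
    rcases le_total (a i) 0 with h | h
    · simpa [posPart_eq_zero.2 h] using hq i
    · simpa [posPart_eq_self.2 h] using haq i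
  have hN0 : 0 ≤ N := sum_nonneg fun i _ => negPart_nonneg _
  nlinarith

end EuclNorm

lemma pos_and_pos_of_mul_pos_of_add_mul_pos {a b x y : ℝ} (ha : 0 < a) (hb : 0 < b)
    (hxy : 0 < x * y) (h : 0 < a * y + b * x) : 0 < x ∧ 0 < y := by
  rcases mul_pos_iff.1 hxy with hpos | ⟨hx, hy⟩
  · exact hpos
  · nlinarith

lemma sqrt_two_mul_sq_div_le {θ : ℝ} (h0 : 0 ≤ θ) (h : θ ≤ 0.29) :
    √2 * θ ^ 2 / (1 - 2 * θ) ≤ θ := by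
  -- the sharp threshold is `θ ≤ 1 / (2 + √2) ≈ 0.2929`
  have hsqrt : √2 ≤ 1.415 := by
    rw [Real.sqrt_le_left (by norm_num)]
    norm_num
  rw [div_le_iff₀ (by norm_num at h ⊢; linarith)]
  nlinarith

section Corrector

variable {ι : Type*} {p w dp dw : ι → ℝ} {μ : ℝ}

lemma add_mul_add_of_corrector (hcorr : ∀ i, w i * dp i + p i * dw i = μ - p i * w i) (i : ι) :
    (p i + dp i) * (w i + dw i) = μ + dp i * dw i := by
  linear_combination hcorr i

variable [Fintype ι]

lemma dotp_add_of_corrector (hcorr : ∀ i, w i * dp i + p i * dw i = μ - p i * w i) :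
    dotp (p + dp) (w + dw) = Fintype.card ι * μ + dotp dp dw := by
  simp only [dotp, Pi.add_apply, add_mul_add_of_corrector hcorr, sum_add_distrib, sum_const,
    card_univ, nsmul_eq_mul]

lemma euclNorm_sub_mean_le_of_corrector [Nonempty ι]
    (hcorr : ∀ i, w i * dp i + p i * dw i = μ - p i * w i) :
    euclNorm ((p + dp) * (w + dw) - fun _ => dotp (p + dp) (w + dw) / Fintype.card ι)
      ≤ euclNorm (dp * dw) := by
  have hcard : (Fintype.card ι : ℝ) ≠ 0 := Nat.cast_ne_zero.2 Fintype.card_ne_zero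
  have hshift : ((p + dp) * (w + dw) - fun _ => dotp (p + dp) (w + dw) / Fintype.card ι)
      = dp * dw - fun _ => dotp dp dw / Fintype.card ι := by
    ext i
    simp only [Pi.sub_apply, Pi.mul_apply, Pi.add_apply, add_mul_add_of_corrector hcorr,
      dotp_add_of_corrector hcorr]
    field_simp
    ring
  rw [hshift]
  exact euclNorm_sub_const_le _ (mul_div_cancel₀ _ hcard)

lemma le_mul_of_euclNorm_sub_le {β : ℝ} (hN : euclNorm (p * w - fun _ => μ) ≤ β * μ) (i : ι) :
    (1 - β) * μ ≤ p i * w i := by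
  have := (abs_le.1 ((abs_le_euclNorm _ i).trans hN)).1
  simp only [Pi.sub_apply, Pi.mul_apply] at this
  linarith

/-- The scaled vectors `u`, `v` need not be formed: `4 dpᵢ dwᵢ ≤ (wᵢ dpᵢ + pᵢ dwᵢ)² / (pᵢ wᵢ)`
is AM-GM. -/
lemma euclNorm_mul_le_of_corrector {θ : ℝ} (hp : ∀ i, 0 < p i) (hw : ∀ i, 0 < w i) (hμ : 0 < μ)
    (hθ : 2 * θ < 1) (hN : euclNorm (p * w - fun _ => μ) ≤ 2 * θ * μ)
    (hcorr : ∀ i, w i * dp i + p i * dw i = μ - p i * w i) (horth : 0 ≤ dotp dp dw) :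
    euclNorm (dp * dw) ≤ √2 * θ ^ 2 / (1 - 2 * θ) * μ := by
  have hθμ : 0 ≤ 2 * θ * μ := (Real.sqrt_nonneg _).trans hN
  have hgap : 0 < (1 - 2 * θ) * μ := mul_pos (by linarith) hμ
  set q : ι → ℝ := fun i => (μ - p i * w i) ^ 2 / (p i * w i)
  have hq : ∀ i, 0 ≤ q i := fun i => div_nonneg (sq_nonneg _) (mul_pos (hp i) (hw i)).le
  have hdq : ∀ i, 4 * (dp i * dw i) ≤ q i := fun i => by
    show _ ≤ (μ - p i * w i) ^ 2 / (p i * w i)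
    rw [← hcorr i, le_div_iff₀ (mul_pos (hp i) (hw i))]
    nlinarith [sq_nonneg (w i * dp i - p i * dw i)]
  have hsumq : ∑ i, q i ≤ 4 * θ ^ 2 * μ / (1 - 2 * θ) :=
    calc ∑ i, q i ≤ ∑ i, (p i * w i - μ) ^ 2 / ((1 - 2 * θ) * μ) := by
          refine sum_le_sum fun i _ => ?_
          rw [← neg_sub, neg_sq]
          exact div_le_div_of_nonneg_left (sq_nonneg _) hgap (le_mul_of_euclNorm_sub_le hN i)
      _ ≤ (2 * θ * μ) ^ 2 / ((1 - 2 * θ) * μ) := by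
          rw [← sum_div]
          exact div_le_div_of_nonneg_right ((euclNorm_le_iff hθμ).1 hN) hgap.le
      _ = 4 * θ ^ 2 * μ / (1 - 2 * θ) := by
          field_simp
          ring
  have hwright := eight_mul_sum_sq_le_sq_sum horth hq hdq
  have hsq := pow_le_pow_left₀ (sum_nonneg fun i _ => hq i) hsumq 2
  rw [euclNorm_le_iff (by positivity)]
  calc ∑ i, (dp * dw) i ^ 2 ≤ (4 * θ ^ 2 * μ / (1 - 2 * θ)) ^ 2 / 8 := by
        simp only [Pi.mul_apply]
        linarith
    _ = (√2 * θ ^ 2 / (1 - 2 * θ) * μ) ^ 2 := by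
        have h2 : √2 ^ 2 = 2 := Real.sq_sqrt zero_le_two
        field_simp
        rw [h2]
        ring

lemma add_pos_of_corrector (hp : ∀ i, 0 < p i) (hw : ∀ i, 0 < w i) (hμ : 0 < μ)
    (hcorr : ∀ i, w i * dp i + p i * dw i = μ - p i * w i) (hsmall : euclNorm (dp * dw) < μ)
    (i : ι) : 0 < p i + dp i ∧ 0 < w i + dw i := by
  refine pos_and_pos_of_mul_pos_of_add_mul_pos (hp i) (hw i) ?_ ?_
  · rw [add_mul_add_of_corrector hcorr]
    have : -μ < dp i * dw i := neg_lt_of_abs_lt ((abs_le_euclNorm (dp * dw) i).trans_lt hsmall)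
    linarith
  · nlinarith [hcorr i, mul_pos (hp i) (hw i)]

lemma le_mean_of_corrector [Nonempty ι] (hcorr : ∀ i, w i * dp i + p i * dw i = μ - p i * w i)
    (horth : 0 ≤ dotp dp dw) : μ ≤ dotp (p + dp) (w + dw) / Fintype.card ι := by
  rw [dotp_add_of_corrector hcorr, le_div_iff₀ (Nat.cast_pos.2 Fintype.card_pos)]
  linarith

theorem corrector_step [Nonempty ι] {θ : ℝ} (hp : ∀ i, 0 < p i) (hw : ∀ i, 0 < w i)
    (hμ : 0 < μ) (hθ0 : 0 ≤ θ) (hθ : θ ≤ 0.29)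
    (hN : euclNorm (p * w - fun _ => μ) ≤ 2 * θ * μ)
    (hcorr : ∀ i, w i * dp i + p i * dw i = μ - p i * w i) (horth : 0 ≤ dotp dp dw) :
    (∀ i, 0 < (p + dp) i) ∧ (∀ i, 0 < (w + dw) i) ∧
    euclNorm ((p + dp) * (w + dw) - fun _ => dotp (p + dp) (w + dw) / Fintype.card ι)
      ≤ √2 * θ ^ 2 / (1 - 2 * θ) * (dotp (p + dp) (w + dw) / Fintype.card ι) ∧
    √2 * θ ^ 2 / (1 - 2 * θ) * (dotp (p + dp) (w + dw) / Fintype.card ι)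
      ≤ θ * (dotp (p + dp) (w + dw) / Fintype.card ι) := by
  have h2θ : 2 * θ < 1 := by norm_num at hθ; linarith
  have hκ := sqrt_two_mul_sq_div_le hθ0 hθ
  have hκ0 : 0 ≤ √2 * θ ^ 2 / (1 - 2 * θ) := div_nonneg (by positivity) (by linarith)
  have hbound := euclNorm_mul_le_of_corrector hp hw hμ h2θ hN hcorr horth
  have hpos := add_pos_of_corrector hp hw hμ hcorr
    (hbound.trans_lt ((mul_lt_iff_lt_one_left hμ).2 (by linarith)))
  have hμP := le_mean_of_corrector hcorr horth
  refine ⟨fun i => (hpos i).1, fun i => (hpos i).2, ?_,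
    mul_le_mul_of_nonneg_right hκ (hμ.le.trans hμP)⟩
  calc _ ≤ euclNorm (dp * dw) := euclNorm_sub_mean_le_of_corrector hcorr
    _ ≤ √2 * θ ^ 2 / (1 - 2 * θ) * μ := hbound
    _ ≤ _ := mul_le_mul_of_nonneg_left hμP hκ0

end Corrector

section BoxQP

variable {n : ℕ} {H : Matrix (Fin n) (Fin n) ℝ} {y z lam gam dx dy dz dl dg : Fin n → ℝ} {mu : ℝ}

lemma StrictlyFeasible.sum_elim_pos {c x : Fin n → ℝ} (hsf : StrictlyFeasible H c x y z lam gam) :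
    (∀ i, 0 < Sum.elim y z i) ∧ ∀ i, 0 < Sum.elim lam gam i :=
  ⟨Sum.forall.2 ⟨hsf.2.2.2.1, hsf.2.2.2.2.1⟩, Sum.forall.2 ⟨hsf.2.2.2.2.2.1, hsf.2.2.2.2.2.2⟩⟩

lemma CorrDir.corrector_sum_elim (hcd : CorrDir H y z lam gam dx dy dz dl dg mu)
    (i : Fin n ⊕ Fin n) :
    Sum.elim lam gam i * Sum.elim dy dz i + Sum.elim y z i * Sum.elim dl dg i
      = mu - Sum.elim y z i * Sum.elim lam gam i := by
  obtain ⟨-, -, -, hy, hz⟩ := hcd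
  rcases i with i | i
  · simpa [mul_comm (y i)] using congrFun hy i
  · simpa [mul_comm (z i)] using congrFun hz i

/-- `Δpᵀ Δω = Δxᵀ H Δx`. -/
lemma CorrDir.dotp_nonneg (hH : H.PosSemidef) (hcd : CorrDir H y z lam gam dx dy dz dl dg mu) :
    0 ≤ dotp (Sum.elim dy dz) (Sum.elim dl dg) := by
  obtain ⟨hdk, hdy, hdz, -, -⟩ := hcd
  have hHdx : H.mulVec dx = dg - dl := by
    rw [← sub_eq_zero, ← hdk]
    abel
  have hquad : dotp (Sum.elim dy dz) (Sum.elim dl dg) = dx ⬝ᵥ H.mulVec dx := by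
    simp only [dotp, dotProduct, Fintype.sum_sum_type, Sum.elim_inl, Sum.elim_inr, hdy, hdz,
      hHdx, ← sum_add_distrib, Pi.neg_apply, Pi.sub_apply]
    exact sum_congr rfl fun i _ => by ring
  simpa [hquad] using hH.dotProduct_mulVec_nonneg dx

lemma StrictlyFeasible.add_of_corrDir {c x : Fin n → ℝ}
    (hsf : StrictlyFeasible H c x y z lam gam) (hcd : CorrDir H y z lam gam dx dy dz dl dg mu)
    (hp : ∀ i, 0 < Sum.elim (y + dy) (z + dz) i) (hw : ∀ i, 0 < Sum.elim (lam + dl) (gam + dg) i) :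
    StrictlyFeasible H c (x + dx) (y + dy) (z + dz) (lam + dl) (gam + dg) := by
  obtain ⟨hkkt, hxy, hxz, -⟩ := hsf
  obtain ⟨hdk, hdy, hdz, -, -⟩ := hcd
  refine ⟨?_, ?_, ?_, fun i => hp (.inl i), fun i => hp (.inr i), fun i => hw (.inl i),
    fun i => hw (.inr i)⟩
  · rw [Matrix.mulVec_add]
    linear_combination hkkt + hdk
  · linear_combination hxy + hdy
  · linear_combination hxz - hdz

end BoxQP

/-- the corrector step brings a point of `N₂(2θ)` back to `N₂(θ)`:
the updated point is strictly feasible and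
`‖p⁺∘ω⁺ − μ⁺e‖ ≤ (√2·θ²/(1−2θ))·μ⁺ ≤ θ·μ⁺`. -/
theorem stmt_13 {n : ℕ} (hn : 0 < n) (H : Matrix (Fin n) (Fin n) ℝ) (hH : H.PosDef)
    (c : Fin n → ℝ)
    (θ : ℝ) (hθ : θ ∈ Set.Ioc (0 : ℝ) 0.29)
    (xb yb zb lb gb : Fin n → ℝ)
    (mub : ℝ)
    (hmub : mub = dotp (Sum.elim yb zb) (Sum.elim lb gb) / (2 * (n : ℝ)))
    (hN : N2 H c (2 * θ) xb yb zb lb gb)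
    (dx dy dz dl dg : Fin n → ℝ)
    (hcd : CorrDir H yb zb lb gb dx dy dz dl dg mub)
    (pP wP : Fin n ⊕ Fin n → ℝ)
    (hpP : pP = Sum.elim (yb + dy) (zb + dz))
    (hwP : wP = Sum.elim (lb + dl) (gb + dg))
    (muP : ℝ) (hmuP : muP = dotp pP wP / (2 * (n : ℝ))) :
    StrictlyFeasible H c (xb + dx) (yb + dy) (zb + dz) (lb + dl) (gb + dg) ∧
    (∀ i, 0 < pP i) ∧ (∀ i, 0 < wP i) ∧
    euclNorm (pP * wP - fun _ => muP) ≤ (Real.sqrt 2 * θ ^ 2 / (1 - 2 * θ)) * muP ∧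
    (Real.sqrt 2 * θ ^ 2 / (1 - 2 * θ)) * muP ≤ θ * muP ∧
    N2 H c θ (xb + dx) (yb + dy) (zb + dz) (lb + dl) (gb + dg) := by
  obtain ⟨hθ0, hθ⟩ := hθ
  obtain ⟨hfeas, hcentral⟩ := hN
  rw [← hmub] at hcentral
  have : Nonempty (Fin n) := ⟨⟨0, hn⟩⟩
  have hcard : 2 * (n : ℝ) = Fintype.card (Fin n ⊕ Fin n) := by simp [two_mul]
  obtain ⟨hp, hw⟩ := hfeas.sum_elim_pos
  have hμ : 0 < mub := hmub ▸ div_pos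
    (sum_pos (fun i _ => mul_pos (hp i) (hw i)) univ_nonempty) (by positivity)
  have hstep := corrector_step hp hw hμ hθ0.le hθ hcentral hcd.corrector_sum_elim
    (hcd.dotp_nonneg hH.posSemidef)
  rw [← Sum.elim_add_add, ← Sum.elim_add_add, ← hcard, ← hpP, ← hwP, ← hmuP] at hstep
  obtain ⟨hpP_pos, hwP_pos, hnorm, hshrink⟩ := hstep
  have hsf := hfeas.add_of_corrDir hcd (hpP ▸ hpP_pos) (hwP ▸ hwP_pos)
  refine ⟨hsf, hpP_pos, hwP_pos, hnorm, hshrink, hsf, ?_⟩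
  subst hpP hwP hmuP
  exact hnorm.trans hshrink

end
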